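/- Under Assumption 2, for every x ∈ 𝒳, t ∈ 𝒯 and y ∈ 𝒴 such that P(X=x, T=t, R^X=1, R^T=1) > 0, P(X=x, Y=y, R^X=1, R^T=1) > 0, and P(R^Y=1 | X=x, Y=y, R^X=1, R^T=1) > 0, the inverse-probability-weighting identity holds: P(Y=y | X=x, T=t) = P(Y=y, R^Y=1 | X=x, T=t, R^X=1, R^T=1) / P(R^Y=1 | X=x, Y=y, R^X=1, R^T=1). -/

import Mathlib

open scoped Classical
noncomputable section

namespace CATEMNAR

variable {Ω : Type*} [Fintype Ω]

/-- Probability of the event `E` under the pmf `p` on the finite space `Ω`. -/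
def Pr (p : Ω → ℝ) (E : Ω → Prop) : ℝ := ∑ ω, if E ω then p ω else 0

/-- Conditional probability `P(E | C)` (junk value `0` when `P(C) = 0`). -/
def CPr (p : Ω → ℝ) (E C : Ω → Prop) : ℝ := Pr p (fun ω => E ω ∧ C ω) / Pr p C

/-- Conditional independence `A ⫫ B | C` under `p`: for all values `a, b, c` with
`P(C = c) > 0`, `P(A = a, B = b | C = c) = P(A = a | C = c) * P(B = b | C = c)`. -/
def CondIndep {α β γ : Type*} (p : Ω → ℝ) (A : Ω → α) (B : Ω → β) (C : Ω → γ) : Prop :=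
  ∀ (a : α) (b : β) (c : γ), 0 < Pr p (fun ω => C ω = c) →
    CPr p (fun ω => A ω = a ∧ B ω = b) (fun ω => C ω = c) =
      CPr p (fun ω => A ω = a) (fun ω => C ω = c) *
        CPr p (fun ω => B ω = b) (fun ω => C ω = c)


lemma Pr_congr (p : Ω → ℝ) (E F : Ω → Prop) (h : ∀ ω, E ω ↔ F ω) :
    Pr p E = Pr p F := by
  unfold Pr; exact Finset.sum_congr rfl (fun ω _ => by simp [h ω])

lemma Pr_mono (p : Ω → ℝ) (hp0 : ∀ ω, 0 ≤ p ω) (E F : Ω → Prop)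
    (h : ∀ ω, E ω → F ω) : Pr p E ≤ Pr p F := by
  unfold Pr
  apply Finset.sum_le_sum
  intro ω _
  by_cases hE : E ω
  · simp [hE, h ω hE]
  · by_cases hF : F ω <;> simp [hE, hF, hp0 ω]

/-- Key consequence of conditional independence in unconditional form. -/
lemma ci_mul (p : Ω → ℝ) (A B C : Ω → Prop) (hC : 0 < Pr p C)
    (h : CPr p (fun ω => A ω ∧ B ω) C = CPr p A C * CPr p B C) :
    Pr p (fun ω => A ω ∧ B ω ∧ C ω) =
      (Pr p (fun ω => A ω ∧ C ω) / Pr p C) * Pr p (fun ω => B ω ∧ C ω) := by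
  have h1 : Pr p (fun ω => A ω ∧ B ω ∧ C ω)
      = Pr p (fun ω => (A ω ∧ B ω) ∧ C ω) := Pr_congr _ _ _ (fun ω => (and_assoc).symm)
  unfold CPr at h
  rw [h1]
  have hne : Pr p C ≠ 0 := hC.ne'
  field_simp at h
  field_simp
  have h' : (Pr p (fun ω => (A ω ∧ B ω) ∧ C ω) * Pr p C) * Pr p C
      = ((Pr p fun ω => A ω ∧ C ω) * Pr p fun ω => B ω ∧ C ω) * Pr p C := by
    linear_combination (Pr p C) * h
  have := mul_right_cancel₀ hne h'
  linarith

/-- Under Assumption 2, the inverse-probability-weighting identity holds: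
`P(Y=y | X=x, T=t)
  = P(Y=y, R^Y=1 | X=x, T=t, R^X=1, R^T=1) / P(R^Y=1 | X=x, Y=y, R^X=1, R^T=1)`. -/
theorem stmt_4 {𝒳 𝒯 𝒴 : Type*} [Fintype 𝒳] [Fintype 𝒯] [Fintype 𝒴]
    (p : Ω → ℝ) (hp0 : ∀ ω, 0 ≤ p ω) (hp1 : ∑ ω, p ω = 1)
    (X : Ω → 𝒳) (T : Ω → 𝒯) (Y : Ω → 𝒴) (RX RT RY : Ω → Bool)
    (hRX : CondIndep p RX Y (fun ω => (X ω, T ω)))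
    (hRT : CondIndep p RT Y (fun ω => (X ω, T ω, RX ω)))
    (hRY : CondIndep p RY T (fun ω => (X ω, Y ω, RX ω, RT ω)))
    (x : 𝒳) (t : 𝒯) (y : 𝒴)
    (hpos1 : 0 < Pr p (fun ω => X ω = x ∧ T ω = t ∧ RX ω = true ∧ RT ω = true))
    (hpos2 : 0 < Pr p (fun ω => X ω = x ∧ Y ω = y ∧ RX ω = true ∧ RT ω = true))
    (hpos3 : 0 < CPr p (fun ω => RY ω = true)
      (fun ω => X ω = x ∧ Y ω = y ∧ RX ω = true ∧ RT ω = true)) :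
    CPr p (fun ω => Y ω = y) (fun ω => X ω = x ∧ T ω = t) =
      CPr p (fun ω => Y ω = y ∧ RY ω = true)
          (fun ω => X ω = x ∧ T ω = t ∧ RX ω = true ∧ RT ω = true) /
        CPr p (fun ω => RY ω = true)
          (fun ω => X ω = x ∧ Y ω = y ∧ RX ω = true ∧ RT ω = true) := by

  -- events
  set C1 : Ω → Prop := fun ω => X ω = x ∧ T ω = t with hC1def
  set C2 : Ω → Prop := fun ω => X ω = x ∧ T ω = t ∧ RX ω = true with hC2def
  set Cond : Ω → Prop := fun ω => X ω = x ∧ T ω = t ∧ RX ω = true ∧ RT ω = true with hConddef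
  set D : Ω → Prop := fun ω => X ω = x ∧ Y ω = y ∧ RX ω = true ∧ RT ω = true with hDdef
  have hc : 0 < Pr p Cond := hpos1
  have hd : 0 < Pr p D := hpos2
  have hb : 0 < Pr p C2 := lt_of_lt_of_le hc (Pr_mono p hp0 _ _ (by tauto))
  have ha : 0 < Pr p C1 := lt_of_lt_of_le hb (Pr_mono p hp0 _ _ (by tauto))
  -- Step 1: apply hRY with a = true, b = t, c = (x, y, true, true)
  have hDshape : ∀ (E : Ω → Prop), Pr p (fun ω => E ω ∧ (X ω, Y ω, RX ω, RT ω) = (x, y, true, true)) = Pr p (fun ω => E ω ∧ D ω) := by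
    intro E; exact Pr_congr _ _ _ (fun ω => by simp [hDdef, Prod.ext_iff, and_assoc])
  have hDshape0 : Pr p (fun ω => (X ω, Y ω, RX ω, RT ω) = (x, y, true, true)) = Pr p D := by
    exact Pr_congr _ _ _ (fun ω => by simp [hDdef, Prod.ext_iff, and_assoc])
  have hDpos' : 0 < Pr p (fun ω => (X ω, Y ω, RX ω, RT ω) = (x, y, true, true)) := by
    rw [hDshape0]; exact hd
  have h1 := ci_mul p (fun ω => RY ω = true) (fun ω => T ω = t)
      (fun ω => (X ω, Y ω, RX ω, RT ω) = (x, y, true, true)) hDpos'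
      (hRY true t (x, y, true, true) hDpos')
  simp only [show ∀ ω, ((X ω, Y ω, RX ω, RT ω) = (x, y, true, true)) = D ω from fun ω => by simp [hDdef, Prod.ext_iff, and_assoc]] at h1
  -- rewrite event shapes in h1
  have e1 : Pr p (fun ω => RY ω = true ∧ T ω = t ∧ D ω)
      = Pr p (fun ω => (Y ω = y ∧ RY ω = true) ∧ Cond ω) :=
    Pr_congr _ _ _ (fun ω => by simp [hDdef, hConddef]; tauto)
  have e2 : Pr p (fun ω => T ω = t ∧ D ω) = Pr p (fun ω => Y ω = y ∧ Cond ω) :=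
    Pr_congr _ _ _ (fun ω => by simp [hDdef, hConddef]; tauto)
  rw [e1, e2] at h1
  -- Step 2: apply hRT with a = true, b = y, c = (x, t, true)
  have hC2shape : (fun ω => (X ω, T ω, RX ω) = (x, t, true)) = C2 :=
    funext fun ω => by simp [hC2def, Prod.ext_iff, and_assoc]
  have hC2pos' : 0 < Pr p (fun ω => (X ω, T ω, RX ω) = (x, t, true)) := by rw [hC2shape]; exact hb
  have h2 := ci_mul p (fun ω => RT ω = true) (fun ω => Y ω = y)
      (fun ω => (X ω, T ω, RX ω) = (x, t, true)) hC2pos'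
      (hRT true y (x, t, true) hC2pos')
  simp only [show ∀ ω, ((X ω, T ω, RX ω) = (x, t, true)) = C2 ω from fun ω => by simp [hC2def, Prod.ext_iff, and_assoc]] at h2
  have e3 : Pr p (fun ω => RT ω = true ∧ Y ω = y ∧ C2 ω)
      = Pr p (fun ω => Y ω = y ∧ Cond ω) :=
    Pr_congr _ _ _ (fun ω => by simp [hC2def, hConddef]; tauto)
  have e4 : Pr p (fun ω => RT ω = true ∧ C2 ω) = Pr p Cond :=
    Pr_congr _ _ _ (fun ω => by simp [hC2def, hConddef]; tauto)
  rw [e3, e4] at h2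
  -- Step 3: apply hRX with a = true, b = y, c = (x, t)
  have hC1shape : (fun ω => (X ω, T ω) = (x, t)) = C1 :=
    funext fun ω => by simp [hC1def, Prod.ext_iff]
  have hC1pos' : 0 < Pr p (fun ω => (X ω, T ω) = (x, t)) := by rw [hC1shape]; exact ha
  have h3 := ci_mul p (fun ω => RX ω = true) (fun ω => Y ω = y)
      (fun ω => (X ω, T ω) = (x, t)) hC1pos'
      (hRX true y (x, t) hC1pos')
  simp only [show ∀ ω, ((X ω, T ω) = (x, t)) = C1 ω from fun ω => by simp [hC1def, Prod.ext_iff]] at h3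
  have e5 : Pr p (fun ω => RX ω = true ∧ Y ω = y ∧ C1 ω)
      = Pr p (fun ω => Y ω = y ∧ C2 ω) :=
    Pr_congr _ _ _ (fun ω => by simp [hC1def, hC2def]; tauto)
  have e6 : Pr p (fun ω => RX ω = true ∧ C1 ω) = Pr p C2 :=
    Pr_congr _ _ _ (fun ω => by simp [hC1def, hC2def]; tauto)
  rw [e5, e6] at h3
  -- final arithmetic
  have hq : 0 < Pr p (fun ω => RY ω = true ∧ D ω) := by
    have h := hpos3
    unfold CPr at h
    rcases div_pos_iff.mp h with ⟨h1,_⟩ | ⟨_,h2⟩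
    · exact h1
    · linarith
  unfold CPr
  rw [h1, h2, h3]
  field_simp


end CATEMNAR
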